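/- arXiv:1601.01857 — 8 statements merged into one kernel-verified Lean document; each statement's English description precedes it below -/
import Mathlib

section
/- Let n ≥ 1 and let W = S_{n+1} be the Weyl group of the root system A_n. Let H ≤ W be the subgroup generated by the transposition s = (1 2), and for g ∈ W let F(g) denote the number of left cosets xH of H in W such that g·xH = xH. Then for every g ∈ W one has (n+1)!·[g = id] + n·F(g) = (n+2)!/2 if g = id, = n! if g is a transposition, and = 0 otherwise. (Equivalently: the total cohomology H*(T_{A_n}) is the W-representation Reg_W + n·Ind_H^W(Triv_H), since the left-hand side is the character of Reg_W ⊕ n·Ind_H^W(Triv_H) and the right-hand side is the total character of H*(T_{A_n}).) -/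
open scoped Classical

/-!
A coset `xH` is fixed by `g` exactly when `x⁻¹ g x ∈ H`, and each fixed coset accounts for
`|H|` such `x`; hence `|H| · F(g) = #{x | x⁻¹ g x ∈ H}`. For `H = {1, s}` with `s` a
transposition, this count is `(n+1)!` at `g = 1`, the order `2 · (n-1)!` of the centralizer
of `s` when `g` is a transposition (`g` is then conjugate to `s`), and `0` otherwise, since
conjugation preserves being a transposition.
-/

open Equiv Subgroup

section FixedCosets

variable {G : Type*} [Group G]

theorem QuotientGroup.smul_mk_eq_mk_iff (H : Subgroup G) (g x : G) :
    g • (x : G ⧸ H) = x ↔ x⁻¹ * g * x ∈ H := by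
  rw [MulAction.Quotient.smul_mk, QuotientGroup.eq, ← H.inv_mem_iff]
  simp [mul_assoc]

theorem Subgroup.card_conj_mem_eq_card_mul_card_fixed (H : Subgroup G) (g : G) :
    Nat.card {x : G // x⁻¹ * g * x ∈ H} = Nat.card H * Nat.card {c : G ⧸ H // g • c = c} := by
  have := QuotientGroup.card_preimage_mk H {c | g • c = c}
  simp only [Set.preimage_ofPred_eq, QuotientGroup.smul_mk_eq_mk_iff] at this
  exact this

theorem IsConj.card_conj_eq_card_centralizer {a b : G} (h : IsConj a b) :
    Nat.card {x : G // x⁻¹ * b * x = a} = Nat.card (centralizer {a}) := by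
  obtain ⟨c, rfl⟩ := isConj_iff.mp h
  refine Nat.card_congr (Equiv.subtypeEquiv (Equiv.mulLeft c⁻¹) fun x => ?_)
  simp only [Equiv.coe_mulLeft, mem_centralizer_singleton_iff]
  rw [show x⁻¹ * (c * a * c⁻¹) * x = (c⁻¹ * x)⁻¹ * (a * (c⁻¹ * x)) by group,
    inv_mul_eq_iff_eq_mul, eq_comm]

theorem mem_zpowers_iff_of_orderOf_eq_two {x y : G} (hx : orderOf x = 2) :
    y ∈ zpowers x ↔ y = 1 ∨ y = x := by
  have hfin : IsOfFinOrder x := orderOf_pos_iff.mp (by omega)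
  rw [hfin.mem_zpowers_iff_mem_range_orderOf, hx]
  simp [Nat.le_one_iff_eq_zero_or_eq_one, or_comm, eq_comm]

end FixedCosets

namespace Equiv.Perm

variable {α : Type*} [Fintype α] [DecidableEq α]

theorem IsSwap.card_centralizer {σ : Perm α} (hσ : σ.IsSwap) :
    Nat.card (centralizer {σ}) = 2 * (Fintype.card α - 2).factorial := by
  rw [nat_card_centralizer, isSwap_iff_cycleType.mp hσ]
  simp [mul_comm]

theorem isSwap_of_isConj {σ τ : Perm α} (hσ : σ.IsSwap) (h : IsConj σ τ) : τ.IsSwap := by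
  rwa [isSwap_iff_cycleType, ← isConj_iff_cycleType_eq.mp h, ← isSwap_iff_cycleType]

theorem card_conj_mem_zpowers_of_isSwap {σ : Perm α} (hσ : σ.IsSwap) (g : Perm α) :
    Nat.card {x : Perm α // x⁻¹ * g * x ∈ zpowers σ} =
      if g = 1 then (Fintype.card α).factorial
      else if g.IsSwap then 2 * (Fintype.card α - 2).factorial else 0 := by
  have hconj_one (x : Perm α) : x⁻¹ * g * x = 1 ↔ g = 1 := by
    simpa using conj_eq_one_iff (a := x⁻¹) (b := g)
  simp_rw [mem_zpowers_iff_of_orderOf_eq_two hσ.orderOf, hconj_one]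
  split_ifs with h1 hg
  · simp [h1, Nat.card_eq_fintype_card, Fintype.card_perm]
  · have hconj : IsConj σ g :=
      isConj_iff_cycleType_eq.mpr (by rw [isSwap_iff_cycleType.mp hσ, isSwap_iff_cycleType.mp hg])
    simp only [h1, false_or]
    rw [hconj.card_conj_eq_card_centralizer, hσ.card_centralizer]
  · have hne (x : Perm α) : x⁻¹ * g * x ≠ σ := fun hx =>
      hg (isSwap_of_isConj hσ (isConj_iff.mpr ⟨x, by rw [← hx]; group⟩))
    simp [h1, hne]

end Equiv.Perm

/-- The total cohomology of the complement of the toric arrangement associated to `Aₙ`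
is the Weyl-group representation `Reg_W + n · Ind_H^W(Triv_H)`, where `W = S_{n+1}` and
`H = ⟨(1 2)⟩`, expressed at the level of characters: the character of
`Reg_W ⊕ n · Ind_H^W(Triv_H)` takes the value `(n+2)!/2` at the identity, `n!` at
transpositions and `0` elsewhere. Here `F g` is the number of left cosets of `H`
fixed by left multiplication by `g`, i.e. the character of `Ind_H^W(Triv_H)` at `g`. -/
theorem stmt_0 (n : ℕ) (hn : 1 ≤ n)
    (H : Subgroup (Equiv.Perm (Fin (n + 1))))
    (hH : H = Subgroup.closure {Equiv.swap (0 : Fin (n + 1)) (1 : Fin (n + 1))})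
    (F : Equiv.Perm (Fin (n + 1)) → ℕ)
    (hF : ∀ g, F g = Nat.card {c : Equiv.Perm (Fin (n + 1)) ⧸ H // g • c = c})
    (g : Equiv.Perm (Fin (n + 1))) :
    (if g = 1 then Nat.factorial (n + 1) else 0) + n * F g =
      if g = 1 then Nat.factorial (n + 2) / 2
      else if g.IsSwap then Nat.factorial n else 0 := by
  have hs : (swap (0 : Fin (n + 1)) 1).IsSwap :=
    Perm.swap_isSwap_iff.mpr (by simp [Fin.ext_iff]; omega)
  rw [← zpowers_eq_closure] at hH
  subst hH
  have hF2 : 2 * F g = Nat.card {x // x⁻¹ * g * x ∈ zpowers (swap (0 : Fin (n + 1)) 1)} := by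
    rw [card_conj_mem_eq_card_mul_card_fixed, Nat.card_zpowers, hs.orderOf, hF]
  rw [Perm.card_conj_mem_zpowers_of_isSwap hs, Fintype.card_fin] at hF2
  split_ifs at hF2 ⊢
  · rw [Nat.factorial_succ (n + 1), ← hF2, mul_left_comm, Nat.mul_div_cancel_left _ two_pos]
    ring
  · have hFg : F g = (n - 1).factorial := by simpa using hF2
    rw [zero_add, hFg, Nat.mul_factorial_pred (by omega)]
  · simp_all
end

section
/- For every n ≥ 1, the polynomial identity ∏_{i=1}^{n} (1 + (i+1)·t) = ∑_{r=0}^{n} e_r(1, 2, …, n) · t^r · (1+t)^{n−r} holds in ℤ[t], where e_r(1, …, n) = ∑_{I ⊆ {1,…,n}, |I| = r} ∏_{i ∈ I} i is the r-th elementary symmetric polynomial evaluated at 1, 2, …, n. (This identity is the content of the formula P(T_{A_n}, t) = ∏_{i=1}^n (1 + (i+1)t) for the Poincaré polynomial of the complement of the toric arrangement associated to A_n, given the Orlik–Solomon-type expansion P(T_{A_n}, t) = ∑_{r=0}^n e_r(1,…,n) t^r (1+t)^{n−r}.) -/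
open Polynomial Finset

theorem Finset.prod_mul_add_eq_sum_powersetCard {ι R : Type*} [CommSemiring R] [DecidableEq ι]
    (s : Finset ι) (a : ι → R) (x y : R) :
    ∏ i ∈ s, (a i * x + y) =
      ∑ r ∈ range (#s + 1), (∑ I ∈ powersetCard r s, ∏ i ∈ I, a i) * x ^ r * y ^ (#s - r) := by
  rw [prod_add, sum_powerset]
  refine sum_congr rfl fun r _ => ?_
  rw [sum_mul, sum_mul]
  refine sum_congr rfl fun I hI => ?_
  obtain ⟨hIs, hIr⟩ := mem_powersetCard.mp hI
  rw [prod_mul_distrib, prod_const, prod_const, card_sdiff_of_subset hIs, hIr]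

theorem stmt_1_general (n : ℕ)
    (e : ℕ → ℤ)
    (he : ∀ r, e r = ∑ I ∈ Finset.powersetCard r (Finset.Icc 1 n), ∏ i ∈ I, (i : ℤ)) :
    ∏ i ∈ Finset.Icc 1 n, (1 + Polynomial.C ((i : ℤ) + 1) * Polynomial.X) =
      ∑ r ∈ Finset.range (n + 1),
        Polynomial.C (e r) * Polynomial.X ^ r * (1 + Polynomial.X) ^ (n - r) := by
  have hfactor : ∀ i : ℕ, (1 : ℤ[X]) + C ((i : ℤ) + 1) * X = C (i : ℤ) * X + (1 + X) := by
    intro i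
    rw [C_add, C_1]
    ring
  simp_rw [hfactor, prod_mul_add_eq_sum_powersetCard, Nat.card_Icc, Nat.add_sub_cancel, he,
    map_sum, map_prod]

/-- The polynomial identity `∏_{i=1}^n (1 + (i+1)t) = ∑_{r=0}^n e_r(1,…,n) tʳ (1+t)^{n-r}`
in `ℤ[t]`, where `e_r(1,…,n)` is the `r`-th elementary symmetric polynomial evaluated at
`1, 2, …, n`.  This is the formula for the Poincaré polynomial of the complement of the
toric arrangement associated to the root system `Aₙ`. -/
theorem stmt_1 (n : ℕ) (hn : 1 ≤ n)
    (e : ℕ → ℤ)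
    (he : ∀ r, e r = ∑ I ∈ Finset.powersetCard r (Finset.Icc 1 n), ∏ i ∈ I, (i : ℤ)) :
    ∏ i ∈ Finset.Icc 1 n, (1 + Polynomial.C ((i : ℤ) + 1) * Polynomial.X) =
      ∑ r ∈ Finset.range (n + 1),
        Polynomial.C (e r) * Polynomial.X ^ r * (1 + Polynomial.X) ^ (n - r) :=
  stmt_1_general n e he
end

section
/- Let V be a real inner product space, let α ∈ V be nonzero, and let M be an additive subgroup of V containing α such that the reflection r_α maps M into M and such that 2(α·v)/(α·α) is an integer for every v ∈ M (as holds when M is the ℤ-span of a crystallographic root system Φ containing α). Then T^{r_α} = T_α if and only if there exists v ∈ M such that 2(α·v)/(α·α) = 1. -/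
/-!
The pairing `f(v) = 2⟪α, v⟫/⟪α, α⟫` is an additive map `f : M →+ ℤ` with `f α = 2`, and
`r_α v = v - f(v) α` and `χ(r_α v) = χ(v) χ(α)^{-f(v)}`. Thus `χ` is `r_α`-invariant iff
`χ(α)^{f(v)} = 1` for all `v`. If `f` takes the value `1` this forces `χ(α) = 1`. Otherwise the image
of `f` is `2ℤ`, and `χ(v) = i^{f(v)}` is `r_α`-invariant with `χ(α) = -1`.
-/

lemma AddChar.map_sub_zsmul_eq_self_iff {A G : Type*} [AddCommGroup A] [CommGroup G]
    (χ : AddChar A G) (v a : A) (n : ℤ) : χ (v - n • a) = χ v ↔ χ a ^ n = 1 := by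
  rw [map_sub_eq_div, map_zsmul_eq_zpow, div_eq_self]

section IntegerPairing

variable {A : Type*} [AddCommGroup A]

lemma AddMonoidHom.even_of_forall_ne_one {f : A →+ ℤ} {a : A} (hfa : f a = 2)
    (hf : ∀ v, f v ≠ 1) (v : A) : Even (f v) := by
  by_contra hodd
  obtain ⟨m, hm⟩ := Int.not_even_iff_odd.mp hodd
  apply hf (v - m • a)
  rw [map_sub, map_zsmul, hfa, hm, smul_eq_mul]
  ring

def AddChar.zpowComp {G : Type*} [CommGroup G] (u : G) (f : A →+ ℤ) : AddChar A G where
  toFun v := u ^ f v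
  map_zero_eq_one' := by simp
  map_add_eq_mul' a b := by simp [zpow_add]

lemma setOf_map_sub_zsmul_eq_self_eq_iff (a : A) (f : A →+ ℤ) (hfa : f a = 2) :
    {χ : AddChar A ℂˣ | ∀ v, χ (v - f v • a) = χ v} = {χ | χ a = 1} ↔ ∃ v, f v = 1 := by
  simp_rw [AddChar.map_sub_zsmul_eq_self_iff]
  constructor
  · intro hset
    by_contra! hf
    let χ := AddChar.zpowComp (Units.mk0 Complex.I Complex.I_ne_zero) f
    have hχa : χ a = -1 := by
      ext
      simp [χ, AddChar.zpowComp, hfa]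
    have hχ : χ ∈ {χ : AddChar A ℂˣ | ∀ v, χ a ^ f v = 1} := fun v ↦ by
      rw [hχa]
      exact (AddMonoidHom.even_of_forall_ne_one hfa hf v).neg_one_zpow
    rw [hset, Set.mem_ofPred_eq, hχa] at hχ
    exact absurd (congrArg Units.val hχ) (by norm_num)
  · rintro ⟨v₀, hv₀⟩
    ext χ
    simp only [Set.mem_ofPred_eq]
    refine ⟨fun h ↦ by simpa [hv₀] using h v₀, fun h v ↦ by rw [h, one_zpow]⟩

end IntegerPairing

lemma AddMonoidHom.exists_intHom_of_forall_exists_int {A : Type*} [AddCommGroup A]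
    (g : A →+ ℝ) (hg : ∀ a, ∃ k : ℤ, g a = k) : ∃ f : A →+ ℤ, ∀ a, (f a : ℝ) = g a := by
  choose f hf using hg
  refine ⟨AddMonoidHom.mk' f fun a b ↦ Int.cast_injective (α := ℝ) ?_, fun a ↦ (hf a).symm⟩
  push_cast
  rw [← hf, ← hf, ← hf, map_add]

/-- Lemma 1 of the paper: let `V` be a real inner product space, `α ∈ V` nonzero, and `M`
an additive subgroup of `V` containing `α`, stable under the reflection
`r(v) = v - (2⟪α,v⟫/⟪α,α⟫)·α`, and such that `2⟪α,v⟫/⟪α,α⟫ ∈ ℤ` for all `v ∈ M`.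
Then the subtori `T^{r_α} = {χ : M → ℂˣ | χ ∘ r = χ}` and `T_α = {χ | χ(α) = 1}` of
`T = Hom(M, ℂˣ)` coincide if and only if `2⟪α,v⟫/⟪α,α⟫ = 1` for some `v ∈ M`. -/
theorem stmt_3 {V : Type*} [NormedAddCommGroup V] [InnerProductSpace ℝ V]
    (α : V) (hα : α ≠ 0)
    (M : AddSubgroup V) (hαM : α ∈ M)
    (r : V → V)
    (hr : ∀ v : V, r v = v - ((2 * inner ℝ α v / inner ℝ α α : ℝ)) • α)
    (hrM : ∀ v ∈ M, r v ∈ M)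
    (hint : ∀ v ∈ M, ∃ k : ℤ, (2 * inner ℝ α v / inner ℝ α α : ℝ) = (k : ℝ)) :
    ({χ : AddChar M ℂˣ | ∀ v : M, χ ⟨r ↑v, hrM ↑v v.2⟩ = χ v} =
        {χ : AddChar M ℂˣ | χ ⟨α, hαM⟩ = 1}) ↔
      ∃ v ∈ M, (2 * inner ℝ α v / inner ℝ α α : ℝ) = 1 := by
  let pairing : M →+ ℝ := AddMonoidHom.mk' (fun v ↦ 2 * inner ℝ α (v : V) / inner ℝ α α)
    fun v w ↦ by simp only [AddSubgroup.coe_add, inner_add_right]; ring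
  obtain ⟨f, hf⟩ := pairing.exists_intHom_of_forall_exists_int fun v ↦ hint v v.2
  have hfα : f ⟨α, hαM⟩ = 2 := by
    have := hf ⟨α, hαM⟩
    rw [show pairing ⟨α, hαM⟩ = 2 from mul_div_cancel_right₀ _ (inner_self_ne_zero.mpr hα)]
      at this
    exact_mod_cast this
  have hrf : ∀ v : M, (⟨r v, hrM v v.2⟩ : M) = v - f v • ⟨α, hαM⟩ := fun v ↦ by
    ext
    change r v = _
    rw [hr, AddSubgroup.coe_sub, AddSubgroup.coe_zsmul, ← Int.cast_smul_eq_zsmul ℝ, hf]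
    rfl
  simp_rw [hrf]
  rw [setOf_map_sub_zsmul_eq_self_eq_iff _ f hfα]
  constructor
  · rintro ⟨v, hv⟩
    exact ⟨v, v.2, by rw [← Int.cast_one, ← hv, hf]; rfl⟩
  · rintro ⟨v, hvM, hv⟩
    exact ⟨⟨v, hvM⟩, by exact_mod_cast (hf ⟨v, hvM⟩).trans hv⟩
end

section
/- Let n ≥ 2, let M = {v ∈ ℤ^{n+1} : ∑ v_i = 0} be the root lattice of A_n, and let g ∈ S_{n+1} be a permutation having a cycle of length at least 3 (i.e. some point whose g-orbit has size ≥ 3), acting on M by permuting coordinates. Then every group homomorphism χ : M → ℂˣ satisfying χ(g·v) = conj(χ(v)) for all v ∈ M has χ(e_i − e_j) = 1 for some i ≠ j. In other words, the fixed-point locus T_{A_n}^{ḡ} of ḡ on the complement T_{A_n} is empty. -/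
/-!
Write `z i j = χ(eᵢ - eⱼ)`; it is a multiplicative cocycle, and the reality condition reads
`z (g i) (g j) = conj (z i j)`. Put `r i = z i (g i)`. Then `r (g i) = conj (r i)`, so `‖r‖` is
constant along the `g`-orbit of a point `a`, while the product of `r` along `orderOf g` steps of
the orbit telescopes to `z a a = 1`. Hence `‖r a‖ = 1`, and
`χ(e_a - e_{g² a}) = r a * r (g a) = r a * conj (r a) = ‖r a‖² = 1`, where `a ≠ g² a` because the
orbit of `a` has at least three points.
-/

open Finset ComplexConjugate

section Cocycle

variable {ι : Type*} {z : ι → ι → ℂ}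

theorem prod_range_cocycle (hz : ∀ i j k, z i j * z j k = z i k) (hz₀ : ∀ i, z i i = 1)
    (f : ℕ → ι) (N : ℕ) : ∏ k ∈ range N, z (f k) (f (k + 1)) = z (f 0) (f N) := by
  induction N with
  | zero => simp [hz₀]
  | succ N ih => rw [prod_range_succ, ih, hz]

theorem cocycle_apply_apply_eq_one [Finite ι] (g : Equiv.Perm ι)
    (hz : ∀ i j k, z i j * z j k = z i k) (hz₀ : ∀ i, z i i = 1)
    (hg : ∀ i j, z (g i) (g j) = conj (z i j)) (a : ι) : z a (g (g a)) = 1 := by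
  set r : ι → ℂ := fun i => z i (g i)
  have hr : ∀ i, r (g i) = conj (r i) := fun i => hg i (g i)
  have hnorm : ∀ k : ℕ, ‖r ((g ^ k) a)‖ = ‖r a‖ := by
    intro k
    induction k with
    | zero => rfl
    | succ k ih => rw [pow_succ', Equiv.Perm.mul_apply, hr, Complex.norm_conj, ih]
  have hprod : ∏ k ∈ range (orderOf g), r ((g ^ k) a) = 1 := by
    have := prod_range_cocycle hz hz₀ (fun k => (g ^ k) a) (orderOf g)
    simpa only [pow_succ', Equiv.Perm.mul_apply, pow_orderOf_eq_one, pow_zero,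
      Equiv.Perm.one_apply, hz₀] using this
  have hra : ‖r a‖ = 1 := by
    have hpow : ‖r a‖ ^ orderOf g = 1 := by
      rw [← norm_one (α := ℂ), ← hprod, norm_prod, prod_congr rfl fun k _ => hnorm k,
        prod_const, card_range]
    exact (pow_eq_one_iff_of_nonneg (norm_nonneg _) (orderOf_pos g).ne').mp hpow
  calc z a (g (g a)) = r a * r (g a) := (hz _ _ _).symm
    _ = 1 := by rw [hr, Complex.mul_conj', hra]; norm_num

end Cocycle

theorem apply_apply_ne_of_three_le_ncard_orbit {ι : Type*} {g : Equiv.Perm ι} {a : ι}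
    (ha : 3 ≤ Set.ncard {y | ∃ k : ℤ, (g ^ k) a = y}) : g (g a) ≠ a := by
  intro h
  have horbit : {y | ∃ k : ℤ, (g ^ k) a = y} ⊆ {a, g a} := by
    rintro _ ⟨k, rfl⟩
    have hsq : ∀ q : ℤ, ((g ^ (2 : ℤ)) ^ q) a = a :=
      Equiv.Perm.zpow_apply_eq_self_of_apply_eq_self (by rwa [zpow_two, Equiv.Perm.mul_apply])
    rw [← Int.emod_add_mul_ediv k 2, zpow_add, zpow_mul, Equiv.Perm.mul_apply, hsq]
    rcases Int.emod_two_eq_zero_or_one k with hk | hk <;> simp [hk]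
  have := (Set.ncard_le_ncard horbit (Set.toFinite _)).trans (Set.ncard_insert_le a {g a})
  rw [Set.ncard_singleton] at this
  omega

section RootLattice

variable {ι : Type*} [DecidableEq ι] {M : AddSubgroup (ι → ℤ)}
  (hroot : ∀ i j : ι, (Pi.single i 1 - Pi.single j 1 : ι → ℤ) ∈ M)

theorem addChar_root_mul_root (χ : AddChar M ℂˣ) (i j k : ι) :
    χ ⟨_, hroot i j⟩ * χ ⟨_, hroot j k⟩ = χ ⟨_, hroot i k⟩ := by
  rw [← AddChar.map_add_eq_mul]
  congr 1
  ext1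
  exact sub_add_sub_cancel _ _ _

theorem addChar_root_self (χ : AddChar M ℂˣ) (i : ι) : χ ⟨_, hroot i i⟩ = 1 := by
  have : (⟨_, hroot i i⟩ : M) = 0 := Subtype.ext (sub_self _)
  rw [this, AddChar.map_zero_eq_one]

end RootLattice

theorem root_comp_perm_inv {ι : Type*} [DecidableEq ι] (g : Equiv.Perm ι) (i j : ι) :
    (fun l => (Pi.single i 1 - Pi.single j 1 : ι → ℤ) (g⁻¹ l))
      = Pi.single (g i) 1 - Pi.single (g j) 1 := by
  ext l
  simp only [Pi.sub_apply, Pi.single_apply, Equiv.Perm.inv_eq_iff_eq]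

theorem stmt_7_general (n : ℕ)
    (M : AddSubgroup (Fin (n + 1) → ℤ))
    (g : Equiv.Perm (Fin (n + 1)))
    (hg : ∃ x : Fin (n + 1), 3 ≤ Set.ncard {y : Fin (n + 1) | ∃ k : ℤ, (g ^ k) x = y})
    (act : (Fin (n + 1) → ℤ) → (Fin (n + 1) → ℤ))
    (hact : ∀ v i, act v i = v (g⁻¹ i))
    (hactM : ∀ v ∈ M, act v ∈ M)
    (hroot : ∀ i j : Fin (n + 1), (Pi.single i 1 - Pi.single j 1 : Fin (n + 1) → ℤ) ∈ M) :
    ∀ χ : AddChar M ℂˣ,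
      (∀ v : M, ((χ ⟨act ↑v, hactM ↑v v.2⟩ : ℂˣ) : ℂ) = starRingEnd ℂ ((χ v : ℂˣ) : ℂ)) →
      ∃ i j : Fin (n + 1), i ≠ j ∧ χ ⟨Pi.single i 1 - Pi.single j 1, hroot i j⟩ = 1 := by
  intro χ hχ
  obtain ⟨a, ha⟩ := hg
  have hconj : ∀ i j, (χ ⟨_, hroot (g i) (g j)⟩ : ℂ) = conj (χ ⟨_, hroot i j⟩ : ℂ) := by
    intro i j
    have hrootg : (⟨act _, hactM _ (hroot i j)⟩ : M) = ⟨_, hroot (g i) (g j)⟩ :=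
      Subtype.ext ((funext fun l => hact _ l).trans (root_comp_perm_inv g i j))
    rw [← hrootg]
    exact hχ ⟨_, hroot i j⟩
  refine ⟨a, g (g a), (apply_apply_ne_of_three_le_ncard_orbit ha).symm, Units.ext ?_⟩
  refine cocycle_apply_apply_eq_one (z := fun i j => (χ ⟨_, hroot i j⟩ : ℂ)) g ?_ ?_ hconj a
  · intro i j k
    simp only [← Units.val_mul, addChar_root_mul_root]
  · intro i
    simp only [addChar_root_self, Units.val_one]

/-- Lemma (no `ḡ`-fixed points for long cycles): let `M = {v ∈ ℤ^{n+1} : ∑ vᵢ = 0}` be the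
root lattice of `Aₙ` (`n ≥ 2`) and let `g ∈ S_{n+1}` have a cycle of length at least 3
(some point whose `g`-orbit has size `≥ 3`), acting on `M` by permuting coordinates
(`(g·v)ᵢ = v_{g⁻¹(i)}`).  Then every character `χ : M → ℂˣ` with `χ(g·v) = conj(χ(v))`
for all `v ∈ M` satisfies `χ(eᵢ - eⱼ) = 1` for some `i ≠ j`; that is, the fixed-point
locus `T_{Aₙ}^{ḡ}` of `ḡ` on the complement `T_{Aₙ}` is empty. -/
theorem stmt_7 (n : ℕ) (hn : 2 ≤ n)
    (M : AddSubgroup (Fin (n + 1) → ℤ))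
    (hM : ∀ v, v ∈ M ↔ ∑ l, v l = 0)
    (g : Equiv.Perm (Fin (n + 1)))
    (hg : ∃ x : Fin (n + 1), 3 ≤ Set.ncard {y : Fin (n + 1) | ∃ k : ℤ, (g ^ k) x = y})
    (act : (Fin (n + 1) → ℤ) → (Fin (n + 1) → ℤ))
    (hact : ∀ v i, act v i = v (g⁻¹ i))
    (hactM : ∀ v ∈ M, act v ∈ M)
    (hroot : ∀ i j : Fin (n + 1), (Pi.single i 1 - Pi.single j 1 : Fin (n + 1) → ℤ) ∈ M) :
    ∀ χ : AddChar M ℂˣ,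
      (∀ v : M, ((χ ⟨act ↑v, hactM ↑v v.2⟩ : ℂˣ) : ℂ) = starRingEnd ℂ ((χ v : ℂˣ) : ℂ)) →
      ∃ i j : Fin (n + 1), i ≠ j ∧ χ ⟨Pi.single i 1 - Pi.single j 1, hroot i j⟩ = 1 :=
  stmt_7_general n M g hg act hact hactM hroot
end

section
/- Let n ≥ 2 and let M = {v ∈ ℤ^{n+1} : ∑ v_i = 0} be the root lattice of A_n, with S_{n+1} acting by permuting coordinates. Let g ∈ S_{n+1} have a cycle of length at least 3. Let L be a free ℤ-module of finite rank with an automorphism h : L → L, let Φ′ ⊆ L be a finite set, and suppose there is an injective additive homomorphism ι : M → L with h∘ι = ι∘g and ι(e_i − e_j) ∈ Φ′ for all i ≠ j. Then every group homomorphism χ : L → ℂˣ satisfying χ(h(w)) = conj(χ(w)) for all w ∈ L has χ(β) = 1 for some β ∈ Φ′. (This is the statement that if a root system Φ of rank n contains A_n as a subroot system and g is an element of the Weyl group of A_n of order greater than 2, then T_Φ^{ḡ} is empty.) -/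
/-!
Write `c(i, j)` for the value of `χ` on `ι(eᵢ - eⱼ)`; then `c(i, j) c(j, k) = c(i, k)` and
`c(gi, gj) = conj c(i, j)`. The values `c(gᵏx, gᵏ⁺¹x)` thus all have the absolute value of
`u = c(x, gx)`, and their product over a period of `g` is `c(x, x) = 1`, so `|u| = 1`. Hence
`c(x, g²x) = u · conj u = 1`, and on a cycle of length at least `3` the vector `e_x - e_{g²x}`
is a root, whose image lies in `Φ'`.
-/

open Finset ComplexConjugate

namespace Equiv.Perm

variable {α : Type*} {g : Perm α} {x : α}

theorem pow_apply_mem_pair_of_apply_apply_eq (hx : g (g x) = x) (i : ℕ) :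
    (g ^ i) x ∈ ({x, g x} : Set α) := by
  induction i with
  | zero => simp
  | succ i ih =>
    rw [pow_succ', Perm.mul_apply]
    rcases ih with h | h
    · simp [h]
    · simp [Set.mem_singleton_iff.mp h, hx]

theorem ncard_sameCycle_le_two_of_apply_apply_eq [Finite α] (hx : g (g x) = x) :
    {y | g.SameCycle x y}.ncard ≤ 2 :=
  calc {y | g.SameCycle x y}.ncard
      ≤ ({x, g x} : Set α).ncard := Set.ncard_le_ncard fun y hy => by
        obtain ⟨i, rfl⟩ := SameCycle.exists_nat_pow_eq hy
        exact pow_apply_mem_pair_of_apply_apply_eq hx i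
    _ ≤ 2 := (Set.ncard_insert_le _ _).trans (by simp)

end Equiv.Perm

namespace AddChar

variable {L : Type*} [AddCommGroup L] (χ : AddChar L ℂˣ) {h : L → L}

theorem norm_apply_iterate (hχ : ∀ w, (χ (h w) : ℂ) = conj (χ w : ℂ)) (w : L) (k : ℕ) :
    ‖(χ (h^[k] w) : ℂ)‖ = ‖(χ w : ℂ)‖ := by
  induction k with
  | zero => rfl
  | succ k ih => rw [Function.iterate_succ_apply', hχ, Complex.norm_conj, ih]

theorem norm_apply_sum_iterate (hχ : ∀ w, (χ (h w) : ℂ) = conj (χ w : ℂ)) (w : L) (m : ℕ) :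
    ‖(χ (∑ k ∈ range m, h^[k] w) : ℂ)‖ = ‖(χ w : ℂ)‖ ^ m := by
  induction m with
  | zero => simp
  | succ m ih =>
    rw [sum_range_succ, map_add_eq_mul, Units.val_mul, norm_mul, ih,
      norm_apply_iterate χ hχ, pow_succ]

theorem norm_apply_eq_one_of_sum_iterate_eq_zero (hχ : ∀ w, (χ (h w) : ℂ) = conj (χ w : ℂ))
    {w : L} {m : ℕ} (hm : m ≠ 0) (hsum : ∑ k ∈ range m, h^[k] w = 0) :
    ‖(χ w : ℂ)‖ = 1 := by
  have h_pow : ‖(χ w : ℂ)‖ ^ m = 1 := by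
    rw [← norm_apply_sum_iterate χ hχ, hsum, map_zero_eq_one, Units.val_one, norm_one]
  exact (pow_eq_one_iff_of_nonneg (norm_nonneg _) hm).mp h_pow

theorem apply_add_apply_eq_one (hχ : ∀ w, (χ (h w) : ℂ) = conj (χ w : ℂ)) {w : L}
    (hw : ‖(χ w : ℂ)‖ = 1) : χ (w + h w) = 1 := by
  ext
  rw [map_add_eq_mul, Units.val_mul, hχ, Complex.mul_conj', hw]
  simp

variable {α : Type*}

theorem apply_eq_one_of_cocycle [Finite α] (hχ : ∀ w, (χ (h w) : ℂ) = conj (χ w : ℂ))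
    (g : Equiv.Perm α) (ρ : α → α → L) (hρ : ∀ i j k, ρ i j + ρ j k = ρ i k)
    (hρg : ∀ i j, h (ρ i j) = ρ (g i) (g j)) (x : α) : χ (ρ x (g (g x))) = 1 := by
  have hρ_self (i : α) : ρ i i = 0 := add_eq_left.mp (hρ i i i)
  have h_iterate (k : ℕ) (i j : α) : h^[k] (ρ i j) = ρ ((g ^ k) i) ((g ^ k) j) := by
    induction k with
    | zero => rfl
    | succ k ih => rw [Function.iterate_succ_apply', ih, hρg, pow_succ', Equiv.Perm.mul_apply,
        Equiv.Perm.mul_apply]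
  have h_telescope (m : ℕ) : ∑ k ∈ range m, h^[k] (ρ x (g x)) = ρ x ((g ^ m) x) := by
    induction m with
    | zero => simp [hρ_self]
    | succ m ih =>
      rw [sum_range_succ, ih, h_iterate, pow_succ, Equiv.Perm.mul_apply, hρ]
  have hw : ‖(χ (ρ x (g x)) : ℂ)‖ = 1 :=
    χ.norm_apply_eq_one_of_sum_iterate_eq_zero hχ (orderOf_pos g).ne' <| by
      rw [h_telescope, pow_orderOf_eq_one, Equiv.Perm.one_apply, hρ_self]
  rw [← hρ x (g x), ← hρg]
  exact χ.apply_add_apply_eq_one hχ hw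

end AddChar

theorem stmt_8_general (n : ℕ)
    (M : AddSubgroup (Fin (n + 1) → ℤ))
    (g : Equiv.Perm (Fin (n + 1)))
    (hg : ∃ x : Fin (n + 1), 3 ≤ Set.ncard {y : Fin (n + 1) | ∃ k : ℤ, (g ^ k) x = y})
    (act : (Fin (n + 1) → ℤ) → (Fin (n + 1) → ℤ))
    (hact : ∀ v i, act v i = v (g⁻¹ i))
    (hactM : ∀ v ∈ M, act v ∈ M)
    (hroot : ∀ i j : Fin (n + 1), (Pi.single i 1 - Pi.single j 1 : Fin (n + 1) → ℤ) ∈ M)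
    (L : Type*) [AddCommGroup L]
    (h : L ≃+ L)
    (Φ' : Finset L)
    (ι : M →+ L)
    (hcomm : ∀ v : M, h (ι v) = ι ⟨act ↑v, hactM ↑v v.2⟩)
    (hΦ' : ∀ i j : Fin (n + 1), i ≠ j →
      ι ⟨Pi.single i 1 - Pi.single j 1, hroot i j⟩ ∈ Φ') :
    ∀ χ : AddChar L ℂˣ,
      (∀ w : L, ((χ (h w) : ℂˣ) : ℂ) = starRingEnd ℂ ((χ w : ℂˣ) : ℂ)) →
      ∃ β ∈ Φ', χ β = 1 := by
  intro χ hχ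
  obtain ⟨x, hx⟩ := hg
  set ρ : Fin (n + 1) → Fin (n + 1) → L :=
    fun i j => ι ⟨Pi.single i 1 - Pi.single j 1, hroot i j⟩
  have hρ (i j k) : ρ i j + ρ j k = ρ i k := by
    simp only [ρ, ← map_add]
    congr 1
    ext1
    simp
  have hρg (i j) : h (ρ i j) = ρ (g i) (g j) := by
    simp only [ρ, hcomm]
    congr 2
    funext l
    simp [hact, Pi.single_apply, Equiv.symm_apply_eq]
  have hx2 : x ≠ g (g x) := fun hfix => by
    have h_le : {y | ∃ k : ℤ, (g ^ k) x = y}.ncard ≤ 2 :=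
      Equiv.Perm.ncard_sameCycle_le_two_of_apply_apply_eq hfix.symm
    omega
  exact ⟨ρ x (g (g x)), hΦ' x _ hx2, χ.apply_eq_one_of_cocycle hχ g ρ hρ hρg x⟩

/-- Corollary: let `Φ` be a root system of rank `n` containing `Aₙ` as a subroot system
(abstracted as: a finite set `Φ'` in a finitely generated free `ℤ`-module `L` with an
automorphism `h`, together with an injective embedding `ι` of the `Aₙ`-root lattice
`M = {v ∈ ℤ^{n+1} : ∑ vᵢ = 0}` intertwining `h` with the coordinate-permutation action of
`g ∈ S_{n+1}` and sending each root `eᵢ - eⱼ` into `Φ'`).  If `g` has a cycle of length at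
least 3 (equivalently, `g` has order greater than 2 up to conjugacy considerations in the
paper), then every character `χ : L → ℂˣ` with `χ(h(w)) = conj(χ(w))` for all `w ∈ L`
satisfies `χ(β) = 1` for some `β ∈ Φ'`; i.e. `T_Φ^{ḡ}` is empty. -/
theorem stmt_8 (n : ℕ) (hn : 2 ≤ n)
    (M : AddSubgroup (Fin (n + 1) → ℤ))
    (hM : ∀ v, v ∈ M ↔ ∑ l, v l = 0)
    (g : Equiv.Perm (Fin (n + 1)))
    (hg : ∃ x : Fin (n + 1), 3 ≤ Set.ncard {y : Fin (n + 1) | ∃ k : ℤ, (g ^ k) x = y})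
    (act : (Fin (n + 1) → ℤ) → (Fin (n + 1) → ℤ))
    (hact : ∀ v i, act v i = v (g⁻¹ i))
    (hactM : ∀ v ∈ M, act v ∈ M)
    (hroot : ∀ i j : Fin (n + 1), (Pi.single i 1 - Pi.single j 1 : Fin (n + 1) → ℤ) ∈ M)
    (L : Type*) [AddCommGroup L] [Module.Free ℤ L] [Module.Finite ℤ L]
    (h : L ≃+ L)
    (Φ' : Finset L)
    (ι : M →+ L) (hι : Function.Injective ι)
    (hcomm : ∀ v : M, h (ι v) = ι ⟨act ↑v, hactM ↑v v.2⟩)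
    (hΦ' : ∀ i j : Fin (n + 1), i ≠ j →
      ι ⟨Pi.single i 1 - Pi.single j 1, hroot i j⟩ ∈ Φ') :
    ∀ χ : AddChar L ℂˣ,
      (∀ w : L, ((χ (h w) : ℂˣ) : ℂ) = starRingEnd ℂ ((χ w : ℂˣ) : ℂ)) →
      ∃ β ∈ Φ', χ β = 1 :=
  stmt_8_general n M g hg act hact hactM hroot L h Φ' ι hcomm hΦ'
end

section
/- Let n ≥ 2 and consider the subset F of (ℂ∖{0})^n consisting of all z = (z_1, …, z_n) such that: z_1 = conj(z_1)^{−1} (i.e. |z_1| = 1), z_2 = conj(z_1)·conj(z_2), z_i = conj(z_i) for 3 ≤ i ≤ n, and ∏_{l=i}^{j} z_l ≠ 1 for all 1 ≤ i ≤ j ≤ n. Then F has exactly n! connected components, each homeomorphic to ℝ^n; in particular the Euler characteristic of F is n!. (F is the fixed-point set T_{A_n}^{ḡ} for g the transposition (1 2), in the coordinates z_i = χ(β_i), so E(T_{A_n}^{ḡ}) = n!.) -/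
/-!
Write `P = (1, z₁, z₁z₂, …, z₁⋯zₙ)` for the partial products of `z`. The consecutive products
`∏_{l=i}^{j} z_l` are the quotients `P_{j}/P_{i-1}`, so they avoid `1` exactly when the entries of
`P` are pairwise distinct. The remaining conditions say that `P₁ = z₁` lies on the unit circle and
that `conj(P_k) · z₁ = P_k` for `k ≥ 2`. Writing `z₁ = (t + i)/(t - i)` with `t ∈ ℝ`, this means
`P_k = (t + i) y_k` with `y_k` real. So the fixed set is homeomorphic to `ℝ × Y`, where
`Y ⊆ ℝⁿ⁻¹` is the set of `y` such that `0, y₂, …, yₙ` are pairwise distinct. The components of `Y`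
are its chambers, indexed by the `n!` orderings of these `n` numbers. The successive gaps in such
an ordering define a linear isomorphism from a chamber onto the open positive orthant, which `log`
carries onto `ℝⁿ⁻¹`.
-/

open Set Function ComplexConjugate Complex

namespace Fin

theorem partialProd_eq_prod_filter {M : Type*} [CommMonoid M] {n : ℕ} (f : Fin n → M)
    (k : Fin (n + 1)) : partialProd f k = ∏ l : Fin n with l.val < k.val, f l :=
  List.prod_take_ofFn f k

theorem partialProd_succ_eq_mul_prod_Icc {M : Type*} [CommMonoid M] {n : ℕ} (f : Fin n → M)
    {i j : Fin n} (hij : i ≤ j) :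
    partialProd f j.succ = partialProd f i.castSucc * ∏ l ∈ Finset.Icc i j, f l := by
  rw [partialProd_eq_prod_filter, partialProd_eq_prod_filter, ← Finset.prod_union]
  · congr 1
    ext l
    simp only [Fin.le_def] at hij
    simp only [Finset.mem_filter, Finset.mem_univ, true_and, Finset.mem_union, Finset.mem_Icc,
      Fin.le_def, val_succ, val_castSucc]
    omega
  · rw [Finset.disjoint_left]
    intro l
    simp only [Finset.mem_filter, Finset.mem_univ, true_and, Finset.mem_Icc, Fin.le_def,
      val_castSucc]
    omega

theorem partialProd_one {M : Type*} [Monoid M] {n : ℕ} (f : Fin (n + 1) → M) :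
    partialProd f 1 = f 0 := by
  simpa using partialProd_succ f 0

theorem continuous_partialProd {M : Type*} [CommMonoid M] [TopologicalSpace M] [ContinuousMul M]
    {n : ℕ} (k : Fin (n + 1)) : Continuous fun f : Fin n → M => partialProd f k := by
  simp_rw [partialProd_eq_prod_filter]
  exact continuous_finsetProd _ fun l _ => continuous_apply l

variable {G : Type*} [CommGroupWithZero G] {n : ℕ}

theorem partialProd_ne_zero {z : Fin n → G} (hz : ∀ i, z i ≠ 0) (k : Fin (n + 1)) :
    partialProd z k ≠ 0 := by
  rw [partialProd_eq_prod_filter]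
  exact Finset.prod_ne_zero_iff.2 fun l _ => hz l

theorem partialProd_div (Q : Fin (n + 1) → G) (h0 : Q 0 = 1) (hQ : ∀ i, Q i ≠ 0) :
    partialProd (fun i => Q i.succ / Q i.castSucc) = Q := by
  funext k
  induction k using Fin.induction with
  | zero => rw [partialProd_zero, h0]
  | succ i ih => rw [partialProd_succ, ih, mul_div_cancel₀ _ (hQ _)]

theorem injective_partialProd_iff {z : Fin n → G} (hz : ∀ i, z i ≠ 0) :
    Injective (partialProd z) ↔ ∀ i j, i ≤ j → ∏ l ∈ Finset.Icc i j, z l ≠ 1 := by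
  constructor
  · intro hinj i j hij hprod
    have h := hinj (by rw [partialProd_succ_eq_mul_prod_Icc z hij, hprod, mul_one] :
      partialProd z j.succ = partialProd z i.castSucc)
    have := congrArg Fin.val h
    simp only [val_succ, val_castSucc, Fin.le_def] at this hij
    omega
  · intro h a b hab
    by_contra hne
    wlog hlt : a < b generalizing a b
    · exact this hab.symm (Ne.symm hne) (lt_of_le_of_ne (not_lt.1 hlt) (Ne.symm hne))
    obtain ⟨i, rfl⟩ : ∃ i : Fin n, i.castSucc = a :=
      ⟨a.castPred (ne_last_of_lt hlt), castSucc_castPred _ _⟩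
    obtain ⟨j, rfl⟩ : ∃ j : Fin n, j.succ = b :=
      ⟨b.pred (ne_zero_of_lt hlt), succ_pred _ _⟩
    have hij : i ≤ j := by
      simp only [Fin.lt_def, val_castSucc, val_succ, Fin.le_def] at hlt ⊢
      omega
    rw [partialProd_succ_eq_mul_prod_Icc z hij] at hab
    exact h i j hij ((mul_eq_left₀ (partialProd_ne_zero hz _)).1 hab.symm)

theorem ne_of_injective_cons {α : Type*} {a : α} {y : Fin n → α}
    (hy : Injective (Fin.cons a y : Fin (n + 1) → α)) (k : Fin n) : y k ≠ a :=
  fun h => (cons_injective_iff.1 hy).1 ⟨k, h⟩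

end Fin

section FiberPartition

variable {X ι : Type*} [TopologicalSpace X] {f : X → ι}

theorem isClopen_preimage_singleton (hf : ∀ i, IsOpen (f ⁻¹' {i})) (i : ι) :
    IsClopen (f ⁻¹' {i}) :=
  letI : TopologicalSpace ι := ⊥
  haveI : DiscreteTopology ι := ⟨rfl⟩
  (isClopen_discrete {i}).preimage (continuous_discrete_rng.2 hf)

theorem connectedComponent_eq_preimage_singleton (hf : ∀ i, IsOpen (f ⁻¹' {i}))
    (hconn : ∀ i, IsPreconnected (f ⁻¹' {i})) (x : X) :
    connectedComponent x = f ⁻¹' {f x} :=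
  subset_antisymm ((isClopen_preimage_singleton hf _).connectedComponent_subset rfl)
    ((hconn _).subset_connectedComponent rfl)

theorem natCard_connectedComponents_eq (hf : ∀ i, IsOpen (f ⁻¹' {i}))
    (hconn : ∀ i, IsConnected (f ⁻¹' {i})) : Nat.card (ConnectedComponents X) = Nat.card ι :=
  Nat.card_congr <| ConnectedComponents.equivOfIsClopenOfIsConnected
    (isClopen_preimage_singleton hf)
    (fun _ _ hij => Disjoint.preimage f (disjoint_singleton.2 hij))
    (iUnion_eq_univ_iff.2 fun x => ⟨f x, rfl⟩) hconn

end FiberPartition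

noncomputable def expPiHomeomorph (ι : Type*) :
    (ι → ℝ) ≃ₜ {g : ι → ℝ // ∀ i, 0 < g i} where
  toFun y := ⟨fun i => Real.exp (y i), fun i => Real.exp_pos _⟩
  invFun g i := Real.log (g.1 i)
  left_inv y := by simp
  right_inv g := Subtype.ext (funext fun i => Real.exp_log (g.2 i))
  continuous_toFun := by fun_prop
  continuous_invFun := continuous_pi fun i =>
    ((continuous_apply i).comp continuous_subtype_val).log fun g => (g.2 i).ne'

section Chamber

variable {N : ℕ}

/-- The chambers of the arrangement `yᵢ = yⱼ`, `yᵢ = 0` in `ℝᴺ`: `σ` lists the `N + 1` numbers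
`0, y 0, …, y (N - 1)` in increasing order. -/
def chamber (σ : Equiv.Perm (Fin (N + 1))) : Set (Fin N → ℝ) :=
  {y | StrictMono ((Fin.cons 0 y : Fin (N + 1) → ℝ) ∘ σ)}

noncomputable def gapMap (σ : Equiv.Perm (Fin (N + 1))) :
    (Fin N → ℝ) →ₗ[ℝ] (Fin N → ℝ) :=
  LinearMap.pi (fun i : Fin N =>
      LinearMap.proj (R := ℝ) (φ := fun _ : Fin (N + 1) => ℝ) i.succ -
        LinearMap.proj i.castSucc) ∘ₗ
    LinearMap.funLeft ℝ ℝ σ ∘ₗ (Fin.consEquivL ℝ fun _ => ℝ).toLinearMap ∘ₗ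
      LinearMap.inr ℝ ℝ (Fin N → ℝ)

theorem gapMap_apply (σ : Equiv.Perm (Fin (N + 1))) (y : Fin N → ℝ) (i : Fin N) :
    gapMap σ y i = (Fin.cons 0 y : Fin (N + 1) → ℝ) (σ i.succ) -
      (Fin.cons 0 y : Fin (N + 1) → ℝ) (σ i.castSucc) :=
  rfl

theorem injective_gapMap (σ : Equiv.Perm (Fin (N + 1))) : Injective (gapMap σ) := by
  rw [← LinearMap.ker_eq_bot, LinearMap.ker_eq_bot']
  intro y hy
  have hconst : ∀ i, (Fin.cons 0 y : Fin (N + 1) → ℝ) (σ i) =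
      (Fin.cons 0 y : Fin (N + 1) → ℝ) (σ 0) := by
    intro i
    induction i using Fin.induction with
    | zero => rfl
    | succ i ih => rw [← ih, ← sub_eq_zero, ← gapMap_apply, hy, Pi.zero_apply]
  have h0 : (Fin.cons 0 y : Fin (N + 1) → ℝ) (σ 0) = 0 := by
    simpa using (hconst (σ.symm 0)).symm
  funext k
  simpa [h0] using hconst (σ.symm k.succ)

theorem mem_chamber_iff {σ : Equiv.Perm (Fin (N + 1))} {y : Fin N → ℝ} :
    y ∈ chamber σ ↔ ∀ i, 0 < gapMap σ y i := by
  simp only [chamber, mem_ofPred_eq, Fin.strictMono_iff_lt_succ, comp_apply, gapMap_apply,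
    sub_pos]

theorem isOpen_chamber (σ : Equiv.Perm (Fin (N + 1))) : IsOpen (chamber σ) := by
  have : chamber σ = ⋂ i, {y | 0 < gapMap σ y i} := by
    ext y
    simp [mem_chamber_iff]
  rw [this]
  exact isOpen_iInter_of_finite fun i =>
    isOpen_lt continuous_const
      ((continuous_apply i).comp (gapMap σ).continuous_of_finiteDimensional)

noncomputable def chamberHomeomorph (σ : Equiv.Perm (Fin (N + 1))) :
    chamber σ ≃ₜ (Fin N → ℝ) :=
  (Homeomorph.subtype
    (LinearEquiv.ofInjectiveEndo _ (injective_gapMap σ)).toContinuousLinearEquiv.toHomeomorph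
    fun _ => mem_chamber_iff).trans (expPiHomeomorph _).symm

theorem injective_of_mem_chamber {σ : Equiv.Perm (Fin (N + 1))} {y : Fin N → ℝ}
    (hy : y ∈ chamber σ) : Injective (Fin.cons 0 y : Fin (N + 1) → ℝ) :=
  (Equiv.injective_comp σ _).1 hy.injective

theorem sort_eq_iff_mem_chamber {σ : Equiv.Perm (Fin (N + 1))} {y : Fin N → ℝ}
    (hy : Injective (Fin.cons 0 y : Fin (N + 1) → ℝ)) :
    Tuple.sort (Fin.cons 0 y : Fin (N + 1) → ℝ) = σ ↔ y ∈ chamber σ := by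
  constructor
  · rintro rfl
    exact (Tuple.monotone_sort _).strictMono_of_injective (hy.comp (Equiv.injective _))
  · intro hσ
    have h := Tuple.comp_sort_eq_comp_iff_monotone.2 hσ.monotone
    exact Equiv.ext fun k => (hy (congrFun h k)).symm

end Chamber

noncomputable def cayley (t : ℝ) : ℂ := (t + I) / (t - I)

noncomputable def cayleyInv (w : ℂ) : ℝ := (I * (w + 1) / (w - 1)).re

theorem ofReal_sub_I_ne_zero (t : ℝ) : (t : ℂ) - I ≠ 0 := by
  intro h
  simpa using congrArg Complex.im h

theorem ofReal_add_I_ne_zero (t : ℝ) : (t : ℂ) + I ≠ 0 := by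
  intro h
  simpa using congrArg Complex.im h

theorem conj_cayley_mul_self (t : ℝ) : conj (cayley t) * cayley t = 1 := by
  have hsub := ofReal_sub_I_ne_zero t
  have hadd := ofReal_add_I_ne_zero t
  simp only [cayley, map_div₀, map_add, map_sub, conj_ofReal, conj_I]
  rw [sub_neg_eq_add, ← sub_eq_add_neg]
  field_simp

theorem cayley_ne_zero (t : ℝ) : cayley t ≠ 0 :=
  div_ne_zero (ofReal_add_I_ne_zero t) (ofReal_sub_I_ne_zero t)

theorem cayley_ne_one (t : ℝ) : cayley t ≠ 1 := by
  rw [cayley, Ne, div_eq_one_iff_eq (ofReal_sub_I_ne_zero t)]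
  intro h
  have := congrArg Complex.im h
  norm_num at this

theorem cayleyInv_cayley (t : ℝ) : cayleyInv (cayley t) = t := by
  have h1 := ofReal_sub_I_ne_zero t
  have h2 : I * (cayley t + 1) / (cayley t - 1) = t := by
    rw [cayley, div_add_one h1, div_sub_one h1, add_add_sub_cancel, add_sub_sub_cancel,
      mul_div_assoc', div_div_div_cancel_right₀ h1]
    field_simp
  rw [cayleyInv, h2, ofReal_re]

theorem cayley_cayleyInv {w : ℂ} (hw : conj w * w = 1) (h1 : w ≠ 1) :
    cayley (cayleyInv w) = w := by
  have hw0 : w ≠ 0 := by rintro rfl; simp at hw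
  have hw1 : w - 1 ≠ 0 := sub_ne_zero.2 h1
  have hconj : conj w = w⁻¹ := eq_inv_of_mul_eq_one_left hw
  have hreal : (cayleyInv w : ℂ) = I * (w + 1) / (w - 1) := by
    refine Complex.conj_eq_iff_re.1 ?_
    rw [map_div₀, map_mul, map_add, map_sub, conj_I, hconj, map_one]
    field_simp
    ring
  rw [cayley, hreal]
  field_simp
  ring

theorem ofReal_re_div_add_I {P : ℂ} {t : ℝ} (h : conj P * cayley t = P) :
    ((P / (t + I)).re : ℂ) = P / (t + I) := by
  have hsub := ofReal_sub_I_ne_zero t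
  have hadd := ofReal_add_I_ne_zero t
  refine Complex.conj_eq_iff_re.1 ?_
  rw [cayley, mul_div_assoc', div_eq_iff hsub] at h
  rw [map_div₀, map_add, conj_ofReal, conj_I, ← sub_eq_add_neg]
  field_simp
  linear_combination h

/-- The paper's `z₁, z₂, …, zₙ` are `z 0, z 1, …, z (n - 1)`, and `n = m + 2`. -/
def fixedSet (m : ℕ) : Set (Fin (m + 2) → ℂ) :=
  {z | (∀ i, z i ≠ 0) ∧ z 0 = (conj (z 0))⁻¹ ∧ z 1 = conj (z 0) * conj (z 1) ∧
    (∀ i : Fin (m + 2), 2 ≤ (i : ℕ) → z i = conj (z i)) ∧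
    (∀ i j : Fin (m + 2), i ≤ j → ∏ l ∈ Finset.Icc i j, z l ≠ 1)}

section PartialProd

variable {m : ℕ} {z : Fin (m + 2) → ℂ}

theorem conj_partialProd_mul_iff (hz : ∀ i, z i ≠ 0) :
    (z 1 = conj (z 0) * conj (z 1) ∧
      ∀ i : Fin (m + 2), 2 ≤ (i : ℕ) → z i = conj (z i)) ↔
      ∀ k : Fin (m + 3), 2 ≤ (k : ℕ) →
        conj (Fin.partialProd z k) * z 0 = Fin.partialProd z k := by
  have hP := Fin.partialProd_ne_zero hz
  have h2 : Fin.partialProd z 2 = z 0 * z 1 := by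
    simpa [Fin.partialProd_one] using Fin.partialProd_succ z 1
  constructor
  · rintro ⟨h1, hreal⟩ k hk
    induction k using Fin.induction with
    | zero => simp at hk
    | succ i ih =>
      rcases (show (i : ℕ) = 1 ∨ 2 ≤ (i : ℕ) by simp at hk; omega) with hi | hi
      · obtain rfl : i = 1 := Fin.ext (by simpa using hi)
        rw [Fin.succ_one_eq_two, h2, map_mul, ← h1]
        ring
      · rw [Fin.partialProd_succ, map_mul, ← hreal i hi, mul_right_comm, ih (by simpa using hi)]
  · intro h
    refine ⟨?_, fun i hi => ?_⟩
    · have := h 2 (by rw [Fin.val_two])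
      rw [h2, map_mul] at this
      exact (mul_left_cancel₀ (hz 0) (by linear_combination this)).symm
    · have hs := h i.succ (by simp; omega)
      have hc := h i.castSucc (by simpa using hi)
      rw [Fin.partialProd_succ, map_mul, mul_right_comm, hc] at hs
      exact (mul_left_cancel₀ (hP _) hs).symm

theorem mem_fixedSet_iff :
    z ∈ fixedSet m ↔ (∀ k, Fin.partialProd z k ≠ 0) ∧
      conj (Fin.partialProd z 1) * Fin.partialProd z 1 = 1 ∧
      (∀ k : Fin (m + 3), 2 ≤ (k : ℕ) →
        conj (Fin.partialProd z k) * Fin.partialProd z 1 = Fin.partialProd z k) ∧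
      Injective (Fin.partialProd z) := by
  rw [Fin.partialProd_one]
  constructor
  · rintro ⟨hz, h0, h1, hreal, hprod⟩
    refine ⟨Fin.partialProd_ne_zero hz, ?_, (conj_partialProd_mul_iff hz).1 ⟨h1, hreal⟩,
      (Fin.injective_partialProd_iff hz).2 hprod⟩
    nth_rewrite 2 [h0]
    exact mul_inv_cancel₀ (by simpa using hz 0)
  · rintro ⟨hP, h0, hcond, hinj⟩
    have hz : ∀ i, z i ≠ 0 := fun i =>
      right_ne_zero_of_mul (by simpa only [Fin.partialProd_succ] using hP i.succ)
    obtain ⟨h1, hreal⟩ := (conj_partialProd_mul_iff hz).2 hcond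
    refine ⟨hz, ?_, h1, hreal, (Fin.injective_partialProd_iff hz).1 hinj⟩
    exact eq_inv_of_mul_eq_one_left ((mul_comm _ _).trans h0)

end PartialProd

section Parametrization

variable {m : ℕ}

noncomputable def paramPartialProd (t : ℝ) (y : Fin (m + 1) → ℝ) : Fin (m + 3) → ℂ :=
  Fin.cons 1 (Fin.cons (cayley t) fun k => (t + I) * y k)

noncomputable def ofParam (t : ℝ) (y : Fin (m + 1) → ℝ) : Fin (m + 2) → ℂ :=
  fun i => paramPartialProd t y i.succ / paramPartialProd t y i.castSucc

noncomputable def toParam (z : Fin (m + 2) → ℂ) : ℝ × (Fin (m + 1) → ℝ) :=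
  (cayleyInv (z 0), fun k => (Fin.partialProd z k.succ.succ / (cayleyInv (z 0) + I)).re)

theorem paramPartialProd_ne_zero {t : ℝ} {y : Fin (m + 1) → ℝ} (hy : ∀ k, y k ≠ 0) (j) :
    paramPartialProd t y j ≠ 0 := by
  induction j using Fin.cases with
  | zero => simp [paramPartialProd]
  | succ j =>
    induction j using Fin.cases with
    | zero => simpa [paramPartialProd] using cayley_ne_zero t
    | succ k => simpa [paramPartialProd] using ⟨ofReal_add_I_ne_zero t, hy k⟩

theorem injective_paramPartialProd {t : ℝ} {y : Fin (m + 1) → ℝ}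
    (hy : Injective (Fin.cons 0 y : Fin (m + 2) → ℝ)) : Injective (paramPartialProd t y) := by
  have hy0 := Fin.ne_of_injective_cons hy
  have hyinj := (Fin.cons_injective_iff.1 hy).2
  have hd := ofReal_add_I_ne_zero t
  refine Fin.cons_injective_iff.2 ⟨?_, Fin.cons_injective_iff.2 ⟨?_, ?_⟩⟩
  · rw [Fin.range_cons, mem_insert_iff, not_or]
    refine ⟨(cayley_ne_one t).symm, ?_⟩
    rintro ⟨k, hk⟩
    exact hy0 k (by simpa using congrArg Complex.im hk)
  · rintro ⟨k, hk⟩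
    rw [cayley, eq_div_iff (ofReal_sub_I_ne_zero t)] at hk
    have : (t + I) * ((y k : ℂ) * (t - I) - 1) = 0 := by linear_combination hk
    exact hy0 k (by simpa using congrArg Complex.im ((mul_eq_zero.1 this).resolve_left hd))
  · intro k l hkl
    exact hyinj (by exact_mod_cast mul_left_cancel₀ hd hkl)

theorem partialProd_ofParam {t : ℝ} {y : Fin (m + 1) → ℝ} (hy : ∀ k, y k ≠ 0) :
    Fin.partialProd (ofParam t y) = paramPartialProd t y :=
  Fin.partialProd_div _ rfl (paramPartialProd_ne_zero hy)

theorem ofParam_mem {t : ℝ} {y : Fin (m + 1) → ℝ}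
    (hy : Injective (Fin.cons 0 y : Fin (m + 2) → ℝ)) : ofParam t y ∈ fixedSet m := by
  have hy0 := Fin.ne_of_injective_cons hy
  have h1 : paramPartialProd t y 1 = cayley t := rfl
  rw [mem_fixedSet_iff, partialProd_ofParam hy0, h1]
  refine ⟨paramPartialProd_ne_zero hy0, conj_cayley_mul_self t, fun k hk => ?_,
    injective_paramPartialProd hy⟩
  obtain ⟨k, rfl⟩ : ∃ l : Fin (m + 1), l.succ.succ = k :=
    ⟨⟨k - 2, by omega⟩, Fin.ext (by simp; omega)⟩
  have := ofReal_sub_I_ne_zero t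
  simp only [paramPartialProd, Fin.cons_succ, cayley, map_mul, map_add, conj_ofReal, conj_I]
  field_simp
  ring

theorem toParam_ofParam {t : ℝ} {y : Fin (m + 1) → ℝ} (hy : ∀ k, y k ≠ 0) :
    toParam (ofParam t y) = (t, y) := by
  have h0 : ofParam t y 0 = cayley t := by simp [ofParam, paramPartialProd]
  simp only [toParam, h0, cayleyInv_cayley, partialProd_ofParam hy, paramPartialProd,
    Fin.cons_succ, mul_div_cancel_left₀ _ (ofReal_add_I_ne_zero t), ofReal_re]

end Parametrization

section Inverse

variable {m : ℕ} {z : Fin (m + 2) → ℂ}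

theorem ne_one_of_mem_fixedSet (hz : z ∈ fixedSet m) : z 0 ≠ 1 := by
  simpa using hz.2.2.2.2 0 0 le_rfl

theorem cayley_toParam_fst (hz : z ∈ fixedSet m) : cayley (toParam z).1 = z 0 := by
  obtain ⟨-, h1, -, -⟩ := mem_fixedSet_iff.1 hz
  rw [Fin.partialProd_one] at h1
  exact cayley_cayleyInv h1 (ne_one_of_mem_fixedSet hz)

theorem ofReal_toParam_snd (hz : z ∈ fixedSet m) (k : Fin (m + 1)) :
    ((toParam z).2 k : ℂ) = Fin.partialProd z k.succ.succ / ((toParam z).1 + I) := by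
  obtain ⟨-, -, hreal, -⟩ := mem_fixedSet_iff.1 hz
  have hk := hreal k.succ.succ (by simp)
  rw [Fin.partialProd_one, ← cayley_toParam_fst hz] at hk
  exact ofReal_re_div_add_I hk

theorem paramPartialProd_toParam (hz : z ∈ fixedSet m) :
    paramPartialProd (toParam z).1 (toParam z).2 = Fin.partialProd z := by
  funext j
  induction j using Fin.cases with
  | zero => simp [paramPartialProd]
  | succ j =>
    induction j using Fin.cases with
    | zero => simpa [paramPartialProd, Fin.partialProd_one] using cayley_toParam_fst hz
    | succ k =>
      simp only [paramPartialProd, Fin.cons_succ, ofReal_toParam_snd hz k]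
      exact mul_div_cancel₀ _ (ofReal_add_I_ne_zero _)

theorem ofParam_toParam (hz : z ∈ fixedSet m) : ofParam (toParam z).1 (toParam z).2 = z := by
  funext i
  rw [ofParam, paramPartialProd_toParam hz, Fin.partialProd_succ,
    mul_div_cancel_left₀ _ (Fin.partialProd_ne_zero hz.1 _)]

theorem injective_cons_toParam (hz : z ∈ fixedSet m) :
    Injective (Fin.cons 0 (toParam z).2 : Fin (m + 2) → ℝ) := by
  obtain ⟨hP, -, -, hinj⟩ := mem_fixedSet_iff.1 hz
  have hd := ofReal_add_I_ne_zero (toParam z).1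
  refine Fin.cons_injective_iff.2 ⟨?_, fun k l hkl => ?_⟩
  · rintro ⟨k, hk⟩
    have := congrArg ((↑) : ℝ → ℂ) hk
    rw [ofReal_toParam_snd hz, ofReal_zero, div_eq_zero_iff] at this
    exact this.elim (hP _) hd
  · have := congrArg ((↑) : ℝ → ℂ) hkl
    rw [ofReal_toParam_snd hz, ofReal_toParam_snd hz, div_left_inj' hd] at this
    exact Fin.succ_injective _ (Fin.succ_injective _ (hinj this))

end Inverse

section Fibers

variable {m : ℕ}

theorem continuous_paramPartialProd :
    Continuous fun p : ℝ × (Fin (m + 1) → ℝ) => paramPartialProd p.1 p.2 := by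
  refine continuous_const.finCons (Continuous.finCons ?_ (continuous_pi fun k => ?_))
  · exact (continuous_ofReal.comp continuous_fst |>.add continuous_const).div
      (continuous_ofReal.comp continuous_fst |>.sub continuous_const)
      fun p => ofReal_sub_I_ne_zero p.1
  · exact (continuous_ofReal.comp continuous_fst |>.add continuous_const).mul
      (continuous_ofReal.comp ((continuous_apply k).comp continuous_snd))

theorem continuous_toParam : Continuous fun z : fixedSet m => toParam z.1 := by
  have h0 : Continuous fun z : fixedSet m => z.1 0 :=
    (continuous_apply 0).comp continuous_subtype_val
  have ht : Continuous fun z : fixedSet m => cayleyInv (z.1 0) :=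
    continuous_re.comp ((continuous_const.mul (h0.add continuous_const)).div
      (h0.sub continuous_const) fun z => sub_ne_zero.2 (ne_one_of_mem_fixedSet z.2))
  refine ht.prodMk (continuous_pi fun k => continuous_re.comp ?_)
  exact ((Fin.continuous_partialProd _).comp continuous_subtype_val).div
    (continuous_ofReal.comp ht |>.add continuous_const) fun z => ofReal_add_I_ne_zero _

noncomputable def chamberIndex (z : fixedSet m) : Equiv.Perm (Fin (m + 2)) :=
  Tuple.sort (Fin.cons 0 (toParam z.1).2 : Fin (m + 2) → ℝ)

theorem chamberIndex_eq_iff {z : fixedSet m} {σ : Equiv.Perm (Fin (m + 2))} :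
    chamberIndex z = σ ↔ (toParam z.1).2 ∈ chamber σ :=
  sort_eq_iff_mem_chamber (injective_cons_toParam z.2)

theorem isOpen_chamberIndex_preimage (σ : Equiv.Perm (Fin (m + 2))) :
    IsOpen (chamberIndex ⁻¹' {σ}) := by
  have : chamberIndex ⁻¹' {σ} = (fun z : fixedSet m => (toParam z.1).2) ⁻¹' chamber σ :=
    Set.ext fun _ => chamberIndex_eq_iff
  rw [this]
  exact (isOpen_chamber σ).preimage (continuous_snd.comp continuous_toParam)

noncomputable def chamberIndexFiberHomeomorphProd (σ : Equiv.Perm (Fin (m + 2))) :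
    chamberIndex ⁻¹' {σ} ≃ₜ ℝ × chamber σ where
  toFun z := ((toParam z.1.1).1, ⟨(toParam z.1.1).2, chamberIndex_eq_iff.1 z.2⟩)
  invFun p := ⟨⟨ofParam p.1 p.2.1, ofParam_mem (injective_of_mem_chamber p.2.2)⟩, by
    rw [mem_preimage, mem_singleton_iff, chamberIndex_eq_iff,
      toParam_ofParam (Fin.ne_of_injective_cons (injective_of_mem_chamber p.2.2))]
    exact p.2.2⟩
  left_inv z := Subtype.ext (Subtype.ext (ofParam_toParam z.1.2))
  right_inv p := by
    have h := toParam_ofParam (t := p.1)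
      (Fin.ne_of_injective_cons (injective_of_mem_chamber p.2.2))
    exact Prod.ext (congrArg Prod.fst h :) (Subtype.ext (congrArg Prod.snd h :))
  continuous_toFun := by
    have h :=
      continuous_toParam.comp (continuous_subtype_val (p := (· ∈ chamberIndex ⁻¹' {σ})))
    exact (continuous_fst.comp h).prodMk ((continuous_snd.comp h).subtype_mk _)
  continuous_invFun := by
    have hQ : Continuous fun p : ℝ × chamber σ => paramPartialProd p.1 p.2.1 :=
      continuous_paramPartialProd.comp
        (continuous_fst.prodMk (continuous_subtype_val.comp continuous_snd))
    refine Continuous.subtype_mk (Continuous.subtype_mk (continuous_pi fun i => ?_) _) _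
    exact ((continuous_apply _).comp hQ).div ((continuous_apply _).comp hQ) fun p =>
      paramPartialProd_ne_zero (Fin.ne_of_injective_cons (injective_of_mem_chamber p.2.2)) _

noncomputable def chamberIndexFiberHomeomorph (σ : Equiv.Perm (Fin (m + 2))) :
    chamberIndex ⁻¹' {σ} ≃ₜ (Fin (m + 2) → ℝ) :=
  (chamberIndexFiberHomeomorphProd σ).trans
    (((Homeomorph.refl ℝ).prodCongr (chamberHomeomorph σ)).trans
      (Fin.consEquivL ℝ fun _ => ℝ).toHomeomorph)

theorem isConnected_chamberIndex_preimage (σ : Equiv.Perm (Fin (m + 2))) :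
    IsConnected (chamberIndex ⁻¹' {σ}) :=
  isConnected_iff_connectedSpace.2 <|
    (chamberIndexFiberHomeomorph σ).symm.surjective.connectedSpace
      (chamberIndexFiberHomeomorph σ).symm.continuous

end Fibers

/-- The fixed-point set `T_{Aₙ}^{ḡ}` for `g` the transposition `(1 2)`, in the coordinates
`zᵢ = χ(βᵢ)` (so `z₁ = conj(z₁)⁻¹`, `z₂ = conj(z₁)·conj(z₂)`, `zᵢ = conj(zᵢ)` for `i ≥ 3`,
and all consecutive products `∏_{l=i}^{j} z_l ≠ 1`), has exactly `n!` connected components,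
each homeomorphic to `ℝⁿ`; in particular its Euler characteristic is `n!`.
(Indices are `0`-based in this formalization: `z₁, …, zₙ` correspond to `z 0, …, z (n-1)`.) -/
theorem stmt_9 (n : ℕ) (hn : 2 ≤ n)
    (F : Set (Fin n → ℂ))
    (hF : F = {z : Fin n → ℂ |
      (∀ i, z i ≠ 0) ∧
      z ⟨0, by omega⟩ = (starRingEnd ℂ (z ⟨0, by omega⟩))⁻¹ ∧
      z ⟨1, by omega⟩ = starRingEnd ℂ (z ⟨0, by omega⟩) * starRingEnd ℂ (z ⟨1, by omega⟩) ∧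
      (∀ i : Fin n, 2 ≤ (i : ℕ) → z i = starRingEnd ℂ (z i)) ∧
      (∀ i j : Fin n, i ≤ j → ∏ l ∈ Finset.Icc i j, z l ≠ 1)}) :
    Nat.card (ConnectedComponents F) = Nat.factorial n ∧
    ∀ x : F, Nonempty ((connectedComponent x) ≃ₜ (Fin n → ℝ)) := by
  obtain ⟨m, rfl⟩ : ∃ m, n = m + 2 := ⟨n - 2, by omega⟩
  obtain rfl : F = fixedSet m := hF
  refine ⟨?_, fun x => ?_⟩
  · rw [natCard_connectedComponents_eq isOpen_chamberIndex_preimage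
      isConnected_chamberIndex_preimage, Nat.card_perm, Nat.card_fin]
  · rw [connectedComponent_eq_preimage_singleton isOpen_chamberIndex_preimage
      fun σ => (isConnected_chamberIndex_preimage σ).isPreconnected]
    exact ⟨chamberIndexFiberHomeomorph _⟩
end

section
/- Let S be a finite set of vectors in ℤ^n each of which is a 0-1 vector whose entries equal to 1 are consecutive. Then the subgroup N = ℤ⟨S⟩ of ℤ^n spanned by S is saturated: for every x ∈ ℤ^n and every nonzero integer m, if m·x ∈ N then x ∈ N. (Equivalently, in the language of the paper: if A is a binary matrix of full rank such that the 1's in each row of A are consecutive, then each pivot element in the row reduced echelon matrix over ℤ obtained from A is 1.) -/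
/-!
The difference map `x ↦ (x_k - x_{k-1})_{0 ≤ k ≤ n}` (with `x_{-1} = x_n = 0`) is an injective
linear map `ℤⁿ → ℤⁿ⁺¹` that sends the indicator of `[i, j]` to `e_i - e_{j+1}`, so it suffices to
show that a lattice `N` spanned by vectors `e_a - e_b` is saturated. Such an `N` is a kernel:
`a ~ b ↔ e_a - e_b ∈ N` is an equivalence relation, and `N` is the kernel of the linear map
sending each `e_a` to `e_{rep a}` for a choice of representatives of the classes. Kernels are
saturated, and saturation pulls back along linear maps.
-/

def Submodule.IsSaturated {R M : Type*} [Semiring R] [AddCommMonoid M] [Module R M]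
    (N : Submodule R M) : Prop :=
  ∀ (r : R) (x : M), r ≠ 0 → r • x ∈ N → x ∈ N

namespace Submodule

variable {R M M₂ : Type*} [Semiring R] [AddCommMonoid M] [Module R M]
  [AddCommMonoid M₂] [Module R M₂]

theorem IsSaturated.comap {P : Submodule R M₂} (hP : P.IsSaturated) (f : M →ₗ[R] M₂) :
    (P.comap f).IsSaturated := fun r x hr hx =>
  hP r (f x) hr (by simpa only [mem_comap, map_smul] using hx)

theorem isSaturated_ker [IsCancelMulZero R] [Module.IsTorsionFree R M₂] (f : M →ₗ[R] M₂) :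
    (LinearMap.ker f).IsSaturated := fun r x hr hx => by
  rw [LinearMap.mem_ker, map_smul] at hx
  exact (smul_eq_zero_iff_right hr).mp hx

end Submodule

section SingleSub

open Submodule

variable {R V : Type*} [Ring R] [Fintype V] [DecidableEq V]

def singleSubSetoid (N : Submodule R (V → R)) : Setoid V where
  r a b := Pi.single a 1 - Pi.single b 1 ∈ N
  iseqv :=
    { refl a := by simp
      symm {a b} h := by simpa only [neg_sub] using N.neg_mem h
      trans {a b c} h₁ h₂ := by simpa only [sub_add_sub_cancel] using N.add_mem h₁ h₂ }

noncomputable def collapse (N : Submodule R (V → R)) : (V → R) →ₗ[R] (V → R) :=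
  Fintype.linearCombination R fun a => Pi.single (Quotient.mk (singleSubSetoid N) a).out 1

theorem sub_collapse_mem (N : Submodule R (V → R)) (v : V → R) : v - collapse N v ∈ N := by
  have hsum : v - collapse N v =
      ∑ a, v a • (Pi.single a 1 - Pi.single (Quotient.mk (singleSubSetoid N) a).out 1) := by
    simp only [collapse, Fintype.linearCombination_apply, smul_sub, Finset.sum_sub_distrib,
      ← Pi.single_smul, smul_eq_mul, mul_one, Finset.univ_sum_single]
  rw [hsum]
  refine N.sum_mem fun a _ => N.smul_mem _ ?_
  exact (singleSubSetoid N).symm (Quotient.mk_out a)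

theorem span_eq_ker_collapse (S : Set (V → R))
    (hS : ∀ v ∈ S, ∃ a b : V, v = Pi.single a 1 - Pi.single b 1) :
    span R S = LinearMap.ker (collapse (span R S)) := by
  refine le_antisymm (span_le.mpr ?_) fun v hv => ?_
  · rintro v hvS
    obtain ⟨a, b, rfl⟩ := hS v hvS
    have hab : Quotient.mk (singleSubSetoid (span R S)) a = Quotient.mk _ b :=
      Quotient.sound (subset_span hvS)
    simp [collapse, Fintype.linearCombination_apply_single, hab]
  · simpa [LinearMap.mem_ker.mp hv] using sub_collapse_mem (span R S) v

theorem isSaturated_span_single_sub_single [IsCancelMulZero R] (S : Set (V → R))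
    (hS : ∀ v ∈ S, ∃ a b : V, v = Pi.single a 1 - Pi.single b 1) :
    (span R S).IsSaturated := by
  rw [span_eq_ker_collapse S hS]
  exact Submodule.isSaturated_ker _

end SingleSub

section FinDiff

variable (R : Type*) [Ring R] (n : ℕ)

noncomputable def padShift : (Fin n → R) →ₗ[R] (ℕ → R) :=
  LinearMap.pi fun l => if h : l ≠ 0 ∧ l ≤ n then LinearMap.proj ⟨l - 1, by omega⟩ else 0

noncomputable def finDiff : (Fin n → R) →ₗ[R] (Fin (n + 1) → R) :=
  LinearMap.funLeft R R (fun k : Fin (n + 1) => (k : ℕ) + 1) ∘ₗ padShift R n -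
    LinearMap.funLeft R R (fun k : Fin (n + 1) => (k : ℕ)) ∘ₗ padShift R n

variable {R n}

theorem padShift_apply (x : Fin n → R) (l : ℕ) :
    padShift R n x l = if h : l ≠ 0 ∧ l ≤ n then x ⟨l - 1, by omega⟩ else 0 := by
  simp only [padShift, LinearMap.pi_apply]
  split_ifs <;> rfl

theorem finDiff_apply (x : Fin n → R) (k : Fin (n + 1)) :
    finDiff R n x k = padShift R n x (k + 1) - padShift R n x k :=
  rfl

theorem finDiff_injective : Function.Injective (finDiff R n) := by
  rw [← LinearMap.ker_eq_bot, LinearMap.ker_eq_bot']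
  intro x hx
  have hpad : ∀ l ≤ n + 1, padShift R n x l = 0 := by
    intro l hl
    induction l with
    | zero => simp [padShift_apply]
    | succ l ih =>
      have hl' := congrFun hx ⟨l, by omega⟩
      rw [finDiff_apply, Pi.zero_apply, sub_eq_zero] at hl'
      exact hl'.trans (ih (by omega))
  funext k
  simpa [padShift_apply] using hpad (k + 1) (by omega)

theorem finDiff_intervalIndicator {i j : ℕ} (hij : i ≤ j) (hj : j < n) :
    finDiff R n (fun l => if i ≤ (l : ℕ) ∧ (l : ℕ) ≤ j then 1 else 0) =
      Pi.single ⟨i, by omega⟩ 1 - Pi.single ⟨j + 1, by omega⟩ 1 := by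
  have hpad : ∀ l, padShift R n (fun l => if i ≤ (l : ℕ) ∧ (l : ℕ) ≤ j then 1 else 0) l =
      if i + 1 ≤ l ∧ l ≤ j + 1 then 1 else 0 := by
    intro l
    rw [padShift_apply]
    split_ifs <;> simp_all <;> omega
  funext k
  simp only [finDiff_apply, hpad, Pi.sub_apply, Pi.single_apply, Fin.ext_iff]
  split_ifs <;> first | omega | simp

end FinDiff

theorem stmt_11_general (n : ℕ) (S : Set (Fin n → ℤ))
    (hS : ∀ s ∈ S, ∃ i j : ℕ, i ≤ j ∧ j < n ∧
      ∀ l : Fin n, s l = if i ≤ (l : ℕ) ∧ (l : ℕ) ≤ j then 1 else 0)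
    (N : AddSubgroup (Fin n → ℤ)) (hN : N = AddSubgroup.closure S) :
    ∀ (x : Fin n → ℤ) (m : ℤ), m ≠ 0 → m • x ∈ N → x ∈ N := by
  subst hN
  intro x m hm hx
  rw [← Submodule.span_int_eq_addSubgroupClosure, Submodule.mem_toAddSubgroup] at hx ⊢
  have hgen : ∀ v ∈ finDiff ℤ n '' S, ∃ a b, v = Pi.single a 1 - Pi.single b 1 := by
    rintro _ ⟨s, hs, rfl⟩
    obtain ⟨i, j, hij, hj, hs⟩ := hS s hs
    exact ⟨_, _, funext hs ▸ finDiff_intervalIndicator hij hj⟩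
  have hsat := (isSaturated_span_single_sub_single _ hgen).comap (finDiff ℤ n)
  rw [← Submodule.map_span, Submodule.comap_map_eq_of_injective finDiff_injective] at hsat
  exact hsat m x hm hx

/-- Lemma: let `S` be a finite set of `0-1` vectors in `ℤⁿ` whose ones are consecutive
(as for the roots of `Aₙ` expressed in the simple roots).  Then the subgroup
`N = ℤ⟨S⟩` is saturated: whenever a nonzero integer multiple of `x ∈ ℤⁿ` lies in `N`,
already `x ∈ N`. -/
theorem stmt_11 (n : ℕ) (S : Set (Fin n → ℤ)) (hfin : S.Finite)
    (hS : ∀ s ∈ S, ∃ i j : ℕ, i ≤ j ∧ j < n ∧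
      ∀ l : Fin n, s l = if i ≤ (l : ℕ) ∧ (l : ℕ) ≤ j then 1 else 0)
    (N : AddSubgroup (Fin n → ℤ)) (hN : N = AddSubgroup.closure S) :
    ∀ (x : Fin n → ℤ) (m : ℤ), m ≠ 0 → m • x ∈ N → x ∈ N :=
  stmt_11_general n S hS N hN
end

section
/- Let n ≥ 1 and let Φ = {e_i − e_j : i ≠ j} ⊆ ℤ^{n+1} be the roots of A_n. For every subset S ⊆ Φ, the subgroup ℤ⟨S⟩ of ℤ^{n+1} is saturated; that is, ℤ⟨S⟩ = span_ℚ(S) ∩ ℤ^{n+1}. Consequently, for any two subsets S, S′ ⊆ Φ, if span_ℚ(S) = span_ℚ(S′) then ℤ⟨S⟩ = ℤ⟨S′⟩, so the map τ : 𝒫(A_n) → 𝒜(A_n), N ↦ N ⊗_ℤ ℚ, from the poset of ℤ-spans of subsets of roots to the poset of ℚ-spans of subsets of roots (each ordered by reverse inclusion), is an isomorphism of posets. -/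
/-!
Let `S` be a set of vectors `eᵢ - eⱼ` and join `i` to `j` whenever `eᵢ - eⱼ ∈ S`; the connected
components of this graph are the elements of `Quot (rootRel S)`. Along a path
the generators telescope, so `eᵢ - eⱼ ∈ ℤ⟨S⟩` for `i, j` in the same component. Summing the
coordinates over a component is a linear form killing every generator, so it vanishes on
`span_ℚ(S)`. Conversely, if all these component sums of an integer vector `x` vanish, then
`x = ∑ᵢ xᵢ (eᵢ - e_{c(i)})` with `c(i)` a fixed representative of the component of `i`, which
lies in `ℤ⟨S⟩`. Hence both `ℤ⟨S⟩` and `span_ℚ(S) ∩ ℤ^{n+1}` are the integer vectors whose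
component sums vanish.
-/

open Finset

section ComponentSum

variable {ι : Type*} [Fintype ι]

open Classical in
noncomputable def componentSum (R : Type*) [Semiring R] (r : ι → ι → Prop) (q : Quot r) :
    (ι → R) →ₗ[R] R :=
  ∑ i with Quot.mk r i = q, LinearMap.proj i

open Classical in
theorem componentSum_apply {R : Type*} [Semiring R] (r : ι → ι → Prop) (q : Quot r)
    (x : ι → R) : componentSum R r q x = ∑ i with Quot.mk r i = q, x i := by
  simp [componentSum]

theorem componentSum_intCast (r : ι → ι → Prop) (q : Quot r) (x : ι → ℤ) :
    componentSum ℚ r q (fun i => (x i : ℚ)) = componentSum ℤ r q x := by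
  simp only [componentSum_apply, Int.cast_sum]

theorem componentSum_single_sub_single [DecidableEq ι] {R : Type*} [Ring R] {r : ι → ι → Prop}
    {i j : ι} (h : Quot.mk r i = Quot.mk r j) (q : Quot r) :
    componentSum R r q (Pi.single i 1 - Pi.single j 1) = 0 := by
  classical
  rw [map_sub, componentSum_apply, componentSum_apply]
  simp only [sum_pi_single', mem_filter, mem_univ, true_and, h, sub_self]

theorem sum_smul_single_out_eq_zero [DecidableEq ι] {r : ι → ι → Prop} {x : ι → ℤ}
    (hx : ∀ q, componentSum ℤ r q x = 0) :
    ∑ i, x i • (Pi.single (Quot.mk r i).out 1 : ι → ℤ) = 0 := by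
  classical
  rw [← sum_fiberwise_of_maps_to (t := univ.image (Quot.mk r))
    (fun i _ => mem_image_of_mem _ (mem_univ i))]
  refine sum_eq_zero fun q _ => ?_
  calc ∑ i with Quot.mk r i = q, x i • (Pi.single (Quot.mk r i).out 1 : ι → ℤ)
      = ∑ i with Quot.mk r i = q, x i • (Pi.single q.out 1 : ι → ℤ) :=
        sum_congr rfl fun i hi => by rw [(mem_filter.mp hi).2]
    _ = componentSum ℤ r q x • Pi.single q.out 1 := by
        rw [componentSum_apply, sum_smul]
    _ = 0 := by rw [hx q, zero_smul]

end ComponentSum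

section RootSubsystem

variable {ι : Type*} [DecidableEq ι]

def rootRel (S : Set (ι → ℤ)) (i j : ι) : Prop :=
  (Pi.single i 1 - Pi.single j 1 : ι → ℤ) ∈ S

theorem single_sub_single_mem_closure {S : Set (ι → ℤ)} {i j : ι}
    (h : Quot.mk (rootRel S) i = Quot.mk (rootRel S) j) :
    (Pi.single i 1 - Pi.single j 1 : ι → ℤ) ∈ AddSubgroup.closure S := by
  have hpath := Quot.eqvGen_exact h
  clear h
  induction hpath with
  | rel a b hab => exact AddSubgroup.subset_closure hab
  | refl a => simp
  | symm a b _ ih => simpa using neg_mem ih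
  | trans a b c _ _ ihab ihbc => simpa using add_mem ihab ihbc

theorem mem_closure_of_componentSum_eq_zero [Fintype ι] {S : Set (ι → ℤ)} {x : ι → ℤ}
    (hx : ∀ q, componentSum ℤ (rootRel S) q x = 0) : x ∈ AddSubgroup.closure S := by
  let c : ι → ι := fun i => (Quot.mk (rootRel S) i).out
  have hdecomp : ∑ i, x i • (Pi.single i 1 - Pi.single (c i) 1 : ι → ℤ) = x := by
    simp only [smul_sub, sum_sub_distrib, c, sum_smul_single_out_eq_zero hx, sub_zero]
    exact (pi_eq_sum_univ' x).symm
  rw [← hdecomp]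
  exact AddSubgroup.sum_mem _ fun i _ => AddSubgroup.zsmul_mem _
    (single_sub_single_mem_closure (Quot.out_eq _).symm) _

theorem componentSum_eq_zero_of_mem_span [Fintype ι] {S : Set (ι → ℤ)}
    (hS : ∀ v ∈ S, ∃ i j : ι, v = Pi.single i 1 - Pi.single j 1) {y : ι → ℚ}
    (hy : y ∈ Submodule.span ℚ ((fun (v : ι → ℤ) (i : ι) => (v i : ℚ)) '' S))
    (q : Quot (rootRel S)) : componentSum ℚ (rootRel S) q y = 0 := by
  suffices Submodule.span ℚ ((fun (v : ι → ℤ) (i : ι) => (v i : ℚ)) '' S) ≤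
      LinearMap.ker (componentSum ℚ (rootRel S) q) from this hy
  rw [Submodule.span_le]
  rintro _ ⟨v, hv, rfl⟩
  obtain ⟨i, j, rfl⟩ := hS v hv
  rw [SetLike.mem_coe, LinearMap.mem_ker, componentSum_intCast,
    componentSum_single_sub_single (Quot.sound hv), Int.cast_zero]

theorem mem_closure_iff_intCast_mem_span [Fintype ι] {S : Set (ι → ℤ)}
    (hS : ∀ v ∈ S, ∃ i j : ι, v = Pi.single i 1 - Pi.single j 1) (x : ι → ℤ) :
    x ∈ AddSubgroup.closure S ↔
      (fun i => (x i : ℚ)) ∈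
        Submodule.span ℚ ((fun (v : ι → ℤ) (i : ι) => (v i : ℚ)) '' S) := by
  refine ⟨fun hx => ?_, fun hx => mem_closure_of_componentSum_eq_zero fun q => ?_⟩
  · have hle : AddSubgroup.closure S ≤
        (Submodule.span ℚ ((fun (v : ι → ℤ) (i : ι) => (v i : ℚ)) '' S)).toAddSubgroup.comap
          ((Int.castAddHom ℚ).compLeft ι) :=
      (AddSubgroup.closure_le _).mpr fun v hv => Submodule.subset_span ⟨v, hv, rfl⟩
    exact hle hx
  · exact_mod_cast (componentSum_intCast _ q x).symm.trans
      (componentSum_eq_zero_of_mem_span hS hx q)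

end RootSubsystem

theorem stmt_12_general (n : ℕ)
    (Φ : Set (Fin (n + 1) → ℤ))
    (hΦ : Φ = {α | ∃ i j : Fin (n + 1), i ≠ j ∧ α = Pi.single i 1 - Pi.single j 1}) :
    (∀ S ⊆ Φ, ∀ x : Fin (n + 1) → ℤ,
      x ∈ AddSubgroup.closure S ↔
        (fun i => (x i : ℚ)) ∈
          Submodule.span ℚ ((fun (v : Fin (n + 1) → ℤ) (i : Fin (n + 1)) => (v i : ℚ)) '' S)) ∧
    (∀ S ⊆ Φ, ∀ S' ⊆ Φ,
      Submodule.span ℚ ((fun (v : Fin (n + 1) → ℤ) (i : Fin (n + 1)) => (v i : ℚ)) '' S) =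
        Submodule.span ℚ ((fun (v : Fin (n + 1) → ℤ) (i : Fin (n + 1)) => (v i : ℚ)) '' S') →
      AddSubgroup.closure S = AddSubgroup.closure S') := by
  have saturated (S : Set (Fin (n + 1) → ℤ)) (hS : S ⊆ Φ) :=
    mem_closure_iff_intCast_mem_span (S := S) fun v hv => by
      obtain ⟨i, j, -, rfl⟩ := hΦ ▸ hS hv
      exact ⟨i, j, rfl⟩
  refine ⟨saturated, fun S hS S' hS' hspan => ?_⟩
  ext x
  rw [saturated S hS x, saturated S' hS' x, hspan]

/-- For the root system `Aₙ` with roots `Φ = {eᵢ - eⱼ : i ≠ j} ⊆ ℤ^{n+1}`: for every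
`S ⊆ Φ` the subgroup `ℤ⟨S⟩` is saturated, i.e. `ℤ⟨S⟩ = span_ℚ(S) ∩ ℤ^{n+1}` (expressed
here as: `x ∈ ℤ⟨S⟩` iff the image of `x` in `ℚ^{n+1}` lies in `span_ℚ(S)`).
Consequently, if two subsets `S, S' ⊆ Φ` have the same `ℚ`-span then they have the same
`ℤ`-span, so the map `τ : 𝒫(Aₙ) → 𝒜(Aₙ)`, `N ↦ N ⊗_ℤ ℚ`, is an isomorphism of posets. -/
theorem stmt_12 (n : ℕ) (hn : 1 ≤ n)
    (Φ : Set (Fin (n + 1) → ℤ))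
    (hΦ : Φ = {α | ∃ i j : Fin (n + 1), i ≠ j ∧ α = Pi.single i 1 - Pi.single j 1}) :
    (∀ S ⊆ Φ, ∀ x : Fin (n + 1) → ℤ,
      x ∈ AddSubgroup.closure S ↔
        (fun i => (x i : ℚ)) ∈
          Submodule.span ℚ ((fun (v : Fin (n + 1) → ℤ) (i : Fin (n + 1)) => (v i : ℚ)) '' S)) ∧
    (∀ S ⊆ Φ, ∀ S' ⊆ Φ,
      Submodule.span ℚ ((fun (v : Fin (n + 1) → ℤ) (i : Fin (n + 1)) => (v i : ℚ)) '' S) =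
        Submodule.span ℚ ((fun (v : Fin (n + 1) → ℤ) (i : Fin (n + 1)) => (v i : ℚ)) '' S') →
      AddSubgroup.closure S = AddSubgroup.closure S') :=
  stmt_12_general n Φ hΦ
end
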